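/- Two infinite paths x, y in X_B lie on the same V_B-orbit, where neither equals x_max nor x_min in forward/backward iteration through them, if x and y are cofinal (agree from some level on). Conversely if x and y are cofinal and neither orbit passes through x_max, then y = V_B^n(x) for some integer n. -/

import Mathlib

/-- There is a path of `st` edges from `v ∈ V k` to `w ∈ V (k + st)`. -/
def ReachesIn (V : ℕ → Type) (E : ℕ → Type)
    (src : ∀ n, E n → V n) (tgt : ∀ n, E n → V (n + 1)) :
    (st : ℕ) → (k : ℕ) → V k → V (k + st) → Prop
  | 0, _, v, w => v = w
  | st + 1, k, v, w =>
      ∃ e : E (k + st), tgt (k + st) e = w ∧ ReachesIn V E src tgt st k v (src (k + st) e)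

/-- `e` is the greatest element of its fiber `tgt⁻¹(tgt e)`. -/
def EdgeMaximal (V : ℕ → Type) (E : ℕ → Type) (tgt : ∀ n, E n → V (n + 1))
    (le : ∀ n, E n → E n → Prop) (n : ℕ) (e : E n) : Prop :=
  ∀ f : E n, tgt n f = tgt n e → le n f e

/-- `e` is the least element of its fiber `tgt⁻¹(tgt e)`. -/
def EdgeMinimal (V : ℕ → Type) (E : ℕ → Type) (tgt : ∀ n, E n → V (n + 1))
    (le : ∀ n, E n → E n → Prop) (n : ℕ) (e : E n) : Prop :=
  ∀ f : E n, tgt n f = tgt n e → le n e f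

/-- `f` is the successor of `e` in the linear order on the fiber `tgt⁻¹(tgt e)`. -/
def EdgeSucc (V : ℕ → Type) (E : ℕ → Type) (tgt : ∀ n, E n → V (n + 1))
    (le : ∀ n, E n → E n → Prop) (n : ℕ) (e f : E n) : Prop :=
  tgt n f = tgt n e ∧ le n e f ∧ e ≠ f ∧
    ∀ g : E n, tgt n g = tgt n e → le n e g → g ≠ e → le n f g

/-!
Order paths reverse-lexicographically: `s < t` when they agree above some level `j` and
`s j < t j` in the fiber order. Cofinal paths are comparable, and the Vershik map sends every
path other than `xmax` to its immediate successor while changing only finitely many edges, so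
orbits stay inside cofinality classes. Conversely, every path strictly between two cofinal
paths agrees with them above a fixed level, so there are only finitely many such paths, and
iterating the Vershik map from the smaller of the two reaches the larger one.
-/

open Filter

theorem Equiv.Perm.SameCycle.rel_of_forall_rel_apply {α : Type*} {σ : Equiv.Perm α}
    {R : α → α → Prop} (hR : Equivalence R) {x y : α}
    (hstep : ∀ w, σ.SameCycle x w → R w (σ w)) (h : σ.SameCycle x y) : R x y := by
  obtain ⟨n, rfl⟩ := h
  induction n using Int.induction_on with
  | zero => exact hR.refl x
  | succ n ih =>
    rw [add_comm, zpow_one_add, Equiv.Perm.mul_apply]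
    exact hR.trans ih (hstep _ ⟨n, Eq.refl _⟩)
  | pred n ih =>
    have hσ : σ ((σ ^ (-(n : ℤ) - 1)) x) = (σ ^ (-(n : ℤ))) x := by
      rw [← Equiv.Perm.mul_apply, ← zpow_one_add, add_sub_cancel]
    exact hR.trans ih (hR.symm (hσ ▸ hstep _ ⟨_, Eq.refl _⟩))

theorem exists_iterate_eq_of_finite_between {α : Type*} {r : α → α → Prop}
    (hirr : ∀ a, ¬ r a a) (htr : ∀ a b c, r a b → r b c → r a c) {f : α → α} {y : α}
    (hf : ∀ w, r w y → r w (f w) ∧ ∀ q, r w q → f w = q ∨ r (f w) q)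
    {x : α} (hfin : {q | r x q ∧ r q y}.Finite) (hxy : r x y) : ∃ m, f^[m] x = y := by
  induction h : {q | r x q ∧ r q y}.ncard using Nat.strong_induction_on generalizing x with
  | _ n ih =>
    obtain ⟨hxfx, hcov⟩ := hf x hxy
    rcases hcov y hxy with hfx | hfx
    · exact ⟨1, hfx⟩
    have hsub : {q | r (f x) q ∧ r q y} ⊆ {q | r x q ∧ r q y} :=
      fun q hq => ⟨htr _ _ _ hxfx hq.1, hq.2⟩
    have hlt := (Set.ssubset_iff_of_subset hsub).2 ⟨f x, ⟨hxfx, hfx⟩, fun hq => hirr _ hq.1⟩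
    obtain ⟨m, hm⟩ := ih _ (h ▸ Set.ncard_lt_ncard hlt hfin) (hfin.subset hlt.subset) hfx rfl
    exact ⟨m + 1, hm⟩

theorem Filter.equivalence_eventually_eq {ι : Type*} {β : ι → Type*} (l : Filter ι) :
    Equivalence fun f g : ∀ i, β i => ∀ᶠ i in l, f i = g i :=
  ⟨fun _ => .of_forall fun _ => rfl, fun h => h.mono fun _ => Eq.symm,
    fun h₁ h₂ => (h₁.and h₂).mono fun _ h => h.1.trans h.2⟩

theorem exists_last_ne_of_eventually_eq {E : ℕ → Type} {s t : ∀ n, E n}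
    (h : ∀ᶠ n in atTop, s n = t n) (hne : s ≠ t) :
    ∃ j, s j ≠ t j ∧ ∀ i, j < i → s i = t i := by
  classical
  rw [eventually_atTop] at h
  have hpos : Nat.find h ≠ 0 := fun h0 => hne (funext fun n => Nat.find_spec h n (by omega))
  obtain ⟨n, hn, hsn⟩ : ∃ n, Nat.find h - 1 ≤ n ∧ s n ≠ t n := by
    simpa only [not_forall, exists_prop] using Nat.find_min h (Nat.sub_one_lt hpos)
  obtain rfl : n = Nat.find h - 1 := by
    by_contra hn'
    exact hsn (Nat.find_spec h n (by omega))
  exact ⟨_, hsn, fun i hi => Nat.find_spec h i (by omega)⟩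

section RevLex

variable {E : ℕ → Type}

def RevLexLT (le : ∀ n, E n → E n → Prop) (s t : ∀ n, E n) : Prop :=
  ∃ j, s j ≠ t j ∧ le j (s j) (t j) ∧ ∀ i, j < i → s i = t i

variable {le : ∀ n, E n → E n → Prop}

theorem revLexLT_irrefl (s : ∀ n, E n) : ¬ RevLexLT le s s :=
  fun ⟨_, hne, _⟩ => hne rfl

theorem revLexLT_trans (hantisymm : ∀ n (e f : E n), le n e f → le n f e → e = f)
    (htrans : ∀ n (e f g : E n), le n e f → le n f g → le n e g) {s t u : ∀ n, E n} :
    RevLexLT le s t → RevLexLT le t u → RevLexLT le s u := by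
  rintro ⟨j₁, hne₁, hle₁, hab₁⟩ ⟨j₂, hne₂, hle₂, hab₂⟩
  rcases lt_trichotomy j₁ j₂ with h | rfl | h
  · exact ⟨j₂, hab₁ j₂ h ▸ hne₂, hab₁ j₂ h ▸ hle₂,
      fun i hi => (hab₁ i (h.trans hi)).trans (hab₂ i hi)⟩
  · refine ⟨j₁, fun hsu => hne₁ (hantisymm _ _ _ hle₁ (hsu ▸ hle₂)),
      htrans _ _ _ _ hle₁ hle₂, fun i hi => (hab₁ i hi).trans (hab₂ i hi)⟩
  · exact ⟨j₁, (hab₂ j₁ h).symm ▸ hne₁, (hab₂ j₁ h).symm ▸ hle₁,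
      fun i hi => (hab₁ i hi).trans (hab₂ i (h.trans hi))⟩

theorem tail_eq_of_revLexLT_of_revLexLT
    (hantisymm : ∀ n (e f : E n), le n e f → le n f e → e = f)
    {x q y : ∀ n, E n} (hxq : RevLexLT le x q) (hqy : RevLexLT le q y) {N : ℕ}
    (hxy : ∀ n, N ≤ n → x n = y n) : ∀ n, N ≤ n → q n = y n := by
  obtain ⟨j₁, hne₁, hle₁, hab₁⟩ := hxq
  obtain ⟨j₂, hne₂, hle₂, hab₂⟩ := hqy
  intro n hn
  by_contra hqn
  have hN : N ≤ j₂ := hn.trans (not_lt.1 fun h => hqn (hab₂ n h))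
  rcases lt_trichotomy j₁ j₂ with h | rfl | h
  · exact hne₂ ((hab₁ j₂ h).symm.trans (hxy j₂ hN))
  · exact hne₁ (hantisymm _ _ _ hle₁ (hxy j₁ hN ▸ hle₂))
  · exact hne₁ ((hxy j₁ (hN.trans h.le)).trans (hab₂ j₁ h).symm)

end RevLex

section PathSpace

variable {V E : ℕ → Type} {src : ∀ n, E n → V n} {tgt : ∀ n, E n → V (n + 1)}
  {le : ∀ n, E n → E n → Prop}

/-- The path space `X_B` of the Bratteli diagram. -/
abbrev PathSpace (src : ∀ n, E n → V n) (tgt : ∀ n, E n → V (n + 1)) : Type :=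
  {x : ∀ n, E n // ∀ n, tgt n (x n) = src (n + 1) (x (n + 1))}

theorem PathSpace.tgt_eq_of_eq_succ {x y : PathSpace src tgt} {j : ℕ}
    (h : x.val (j + 1) = y.val (j + 1)) : tgt j (x.val j) = tgt j (y.val j) := by
  rw [x.prop, y.prop, h]

theorem PathSpace.finite_setOf_tail_eq [∀ n, Finite (E n)] (y : PathSpace src tgt) (N : ℕ) :
    {q : PathSpace src tgt | ∀ n, N ≤ n → q.val n = y.val n}.Finite := by
  refine Set.Finite.of_finite_image (f := fun q (i : Fin N) => q.val i) (Set.toFinite _) ?_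
  intro q₁ h₁ q₂ h₂ hq
  refine Subtype.ext (funext fun n => ?_)
  by_cases hn : n < N
  · exact congrFun hq ⟨n, hn⟩
  · exact (h₁ n (not_lt.1 hn)).trans (h₂ n (not_lt.1 hn)).symm

theorem PathSpace.revLexLT_or_revLexLT
    (htotal : ∀ n (e f : E n), tgt n e = tgt n f → le n e f ∨ le n f e)
    {x y : PathSpace src tgt} (hxy : ∀ᶠ n in atTop, x.val n = y.val n) (hne : x ≠ y) :
    RevLexLT le x.val y.val ∨ RevLexLT le y.val x.val := by
  obtain ⟨j, hj, hab⟩ := exists_last_ne_of_eventually_eq hxy (Subtype.val_injective.ne hne)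
  rcases htotal j _ _ (tgt_eq_of_eq_succ (hab (j + 1) j.lt_succ_self)) with h | h
  · exact .inl ⟨j, hj, h, hab⟩
  · exact .inr ⟨j, Ne.symm hj, h, fun i hi => (hab i hi).symm⟩

theorem PathSpace.eq_or_revLexLT_of_edgeMinimal {s t : PathSpace src tgt} {k : ℕ}
    (hmin : ∀ i, i < k → EdgeMinimal V E tgt le i (s.val i))
    (hagree : ∀ n, k ≤ n → s.val n = t.val n) : s = t ∨ RevLexLT le s.val t.val := by
  by_cases hst : s = t
  · exact .inl hst
  obtain ⟨j, hj, hab⟩ := exists_last_ne_of_eventually_eq (eventually_atTop.2 ⟨k, hagree⟩)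
    (Subtype.val_injective.ne hst)
  have hjk : j < k := not_le.1 fun h => hj (hagree j h)
  exact .inr ⟨j, hj, hmin j hjk _ (tgt_eq_of_eq_succ (hab (j + 1) j.lt_succ_self)).symm, hab⟩

theorem not_edgeMaximal_of_le_of_ne (hcomp : ∀ n (e f : E n), le n e f → tgt n e = tgt n f)
    (hantisymm : ∀ n (e f : E n), le n e f → le n f e → e = f) {n : ℕ} {e f : E n}
    (hle : le n e f) (hne : e ≠ f) : ¬ EdgeMaximal V E tgt le n e :=
  fun hmax => hne (hantisymm n e f hle (hmax f (hcomp n e f hle).symm))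

theorem not_revLexLT_of_edgeMaximal (hcomp : ∀ n (e f : E n), le n e f → tgt n e = tgt n f)
    (hantisymm : ∀ n (e f : E n), le n e f → le n f e → e = f) {s t : ∀ n, E n}
    (hmax : ∀ n, EdgeMaximal V E tgt le n (s n)) : ¬ RevLexLT le s t :=
  fun ⟨j, hne, hle, _⟩ => not_edgeMaximal_of_le_of_ne hcomp hantisymm hle hne (hmax j)

theorem revLexLT_of_edgeSucc {s t : ∀ n, E n} {k : ℕ}
    (hsucc : EdgeSucc V E tgt le k (s k) (t k)) (habove : ∀ i, k < i → t i = s i) :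
    RevLexLT le s t :=
  ⟨k, hsucc.2.2.1, hsucc.2.1, fun i hi => (habove i hi).symm⟩

theorem PathSpace.eq_or_revLexLT_of_edgeSucc
    (hcomp : ∀ n (e f : E n), le n e f → tgt n e = tgt n f)
    (hantisymm : ∀ n (e f : E n), le n e f → le n f e → e = f)
    {w w' : PathSpace src tgt} {k : ℕ}
    (hmax : ∀ i, i < k → EdgeMaximal V E tgt le i (w.val i))
    (hsucc : EdgeSucc V E tgt le k (w.val k) (w'.val k))
    (habove : ∀ i, k < i → w'.val i = w.val i)
    (hmin : ∀ i, i < k → EdgeMinimal V E tgt le i (w'.val i))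
    {q : PathSpace src tgt} (hwq : RevLexLT le w.val q.val) :
    w' = q ∨ RevLexLT le w'.val q.val := by
  obtain ⟨j, hne, hle, hab⟩ := hwq
  have hkj : k ≤ j := not_lt.1 fun hjk =>
    not_edgeMaximal_of_le_of_ne hcomp hantisymm hle hne (hmax j hjk)
  obtain rfl | hkj := hkj.eq_or_lt
  · have hle' : le k (w'.val k) (q.val k) :=
      hsucc.2.2.2 _ (hcomp _ _ _ hle).symm hle (Ne.symm hne)
    by_cases hqk : w'.val k = q.val k
    · refine eq_or_revLexLT_of_edgeMinimal hmin fun n hn => ?_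
      obtain rfl | hn := hn.eq_or_lt
      exacts [hqk, (habove n hn).trans (hab n hn)]
    · exact .inr ⟨k, hqk, hle', fun i hi => (habove i hi).trans (hab i hi)⟩
  · exact .inr ⟨j, habove j hkj ▸ hne, habove j hkj ▸ hle,
      fun i hi => (habove i (hkj.trans hi)).trans (hab i hi)⟩

theorem PathSpace.sameCycle_of_revLexLT [∀ n, Finite (E n)]
    (hantisymm : ∀ n (e f : E n), le n e f → le n f e → e = f)
    (htrans : ∀ n (e f g : E n), le n e f → le n f g → le n e g)
    {Φ : Equiv.Perm (PathSpace src tgt)} {a b : PathSpace src tgt}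
    (hsucc : ∀ w : PathSpace src tgt, RevLexLT le w.val b.val →
      RevLexLT le w.val (Φ w).val ∧ ∀ q : PathSpace src tgt, RevLexLT le w.val q.val →
        Φ w = q ∨ RevLexLT le (Φ w).val q.val)
    (hab : ∀ᶠ n in atTop, a.val n = b.val n) (hlt : RevLexLT le a.val b.val) :
    Φ.SameCycle a b := by
  obtain ⟨N, hN⟩ := eventually_atTop.1 hab
  have hfin :
      {q : PathSpace src tgt | RevLexLT le a.val q.val ∧ RevLexLT le q.val b.val}.Finite :=
    (b.finite_setOf_tail_eq N).subset fun q hq =>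
      tail_eq_of_revLexLT_of_revLexLT hantisymm hq.1 hq.2 hN
  obtain ⟨m, hm⟩ := exists_iterate_eq_of_finite_between
    (r := fun v w : PathSpace src tgt => RevLexLT le v.val w.val) (fun w => revLexLT_irrefl w.val)
    (fun _ _ _ => revLexLT_trans hantisymm htrans) hsucc hfin hlt
  exact ⟨m, by rw [zpow_natCast, ← Equiv.Perm.iterate_eq_pow, hm]⟩

end PathSpace

theorem vershik_orbit_iff_cofinal_general
    (V : ℕ → Type) (E : ℕ → Type)
    [∀ n, Fintype (E n)]
    (src : ∀ n, E n → V n) (tgt : ∀ n, E n → V (n + 1))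
    -- the partial order on edges: a linear order on each fiber, and comparable edges
    -- have equal range
    (le : ∀ n, E n → E n → Prop)
    (hcomp : ∀ n (e f : E n), le n e f → tgt n e = tgt n f)
    (hantisymm : ∀ n (e f : E n), le n e f → le n f e → e = f)
    (htrans : ∀ n (e f g : E n), le n e f → le n f g → le n e g)
    (htotal : ∀ n (e f : E n), tgt n e = tgt n f → le n e f ∨ le n f e)
    -- the unique maximal and minimal paths
    (xmax xmin : {x : ∀ n, E n // ∀ n, tgt n (x n) = src (n + 1) (x (n + 1))})
    (hxmax : ∀ n, EdgeMaximal V E tgt le n (xmax.val n)) :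
    ∀ Φ : Equiv.Perm {x : ∀ n, E n // ∀ n, tgt n (x n) = src (n + 1) (x (n + 1))},
      Φ xmax = xmin →
      (∀ x, x ≠ xmax → ∃ k : ℕ,
        (∀ i, i < k → EdgeMaximal V E tgt le i (x.val i)) ∧
        ¬ EdgeMaximal V E tgt le k (x.val k) ∧
        EdgeSucc V E tgt le k (x.val k) ((Φ x).val k) ∧
        (∀ i, k < i → (Φ x).val i = x.val i) ∧
        (∀ i, i < k → EdgeMinimal V E tgt le i ((Φ x).val i))) →
      ∀ x y : {x : ∀ n, E n // ∀ n, tgt n (x n) = src (n + 1) (x (n + 1))},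
        (∀ n : ℤ, (Φ ^ n) x ≠ xmax) →
        ((∃ n : ℤ, (Φ ^ n) x = y) ↔ ∃ N : ℕ, ∀ n, N ≤ n → x.val n = y.val n) := by
  intro Φ _ hΦ x y hx
  have hsucc : ∀ w : PathSpace src tgt, w ≠ xmax → RevLexLT le w.val (Φ w).val ∧
      ∀ q : PathSpace src tgt, RevLexLT le w.val q.val →
        Φ w = q ∨ RevLexLT le (Φ w).val q.val := by
    intro w hw
    obtain ⟨k, hmax, -, hs, habove, hmin⟩ := hΦ w hw
    exact ⟨revLexLT_of_edgeSucc hs habove,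
      fun _ => PathSpace.eq_or_revLexLT_of_edgeSucc hcomp hantisymm hmax hs habove hmin⟩
  -- Nothing lies above `xmax`, so every path below some `b` is moved by `Φ` to its successor.
  have hclimb : ∀ {a b : PathSpace src tgt}, (∀ᶠ n in atTop, a.val n = b.val n) →
      RevLexLT le a.val b.val → Φ.SameCycle a b := fun hab hlt =>
    PathSpace.sameCycle_of_revLexLT hantisymm htrans (fun w hw => hsucc w (by
      rintro rfl; exact not_revLexLT_of_edgeMaximal hcomp hantisymm hxmax hw)) hab hlt
  show Φ.SameCycle x y ↔ _
  rw [← eventually_atTop]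
  constructor
  · refine fun h => h.rel_of_forall_rel_apply
      ((equivalence_eventually_eq atTop).comap Subtype.val) fun w ⟨n, hn⟩ => ?_
    obtain ⟨k, -, -, -, habove, -⟩ := hΦ w (hn ▸ hx n)
    exact (eventually_gt_atTop k).mono fun i hi => (habove i hi).symm
  · intro h
    by_cases hxy : x = y
    · exact hxy ▸ .rfl
    rcases PathSpace.revLexLT_or_revLexLT htotal h hxy with hlt | hlt
    exacts [hclimb h hlt, (hclimb (h.mono fun _ => Eq.symm) hlt).symm]

/-- Two infinite paths `x, y ∈ X_B` lie on the same `V_B`-orbit iff they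
are cofinal (their edge sequences agree from some level on), provided the orbit of `x`
does not pass through the unique maximal path `xmax`.  Here `Φ` is any bijection of `X_B`
with the defining properties of the Vershik map. -/
theorem vershik_orbit_iff_cofinal
    (V : ℕ → Type) (E : ℕ → Type)
    [∀ n, Fintype (V n)] [∀ n, Fintype (E n)]
    (src : ∀ n, E n → V n) (tgt : ∀ n, E n → V (n + 1))
    (hrange : ∀ n (v : V (n + 1)), ∃ e : E n, tgt n e = v)
    (hsource : ∀ n (v : V n), ∃ e : E n, src n e = v)
    -- the partial order on edges: a linear order on each fiber, and comparable edges
    -- have equal range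
    (le : ∀ n, E n → E n → Prop)
    (hcomp : ∀ n (e f : E n), le n e f → tgt n e = tgt n f)
    (hrefl : ∀ n (e : E n), le n e e)
    (hantisymm : ∀ n (e f : E n), le n e f → le n f e → e = f)
    (htrans : ∀ n (e f g : E n), le n e f → le n f g → le n e g)
    (htotal : ∀ n (e f : E n), tgt n e = tgt n f → le n e f ∨ le n f e)
    -- simplicity of the diagram
    (hsimple : ∃ m : ℕ → ℕ, m 0 = 0 ∧ StrictMono m ∧
      ∀ n (v : V (m n)) (w : V (m n + (m (n + 1) - m n))),
        ReachesIn V E src tgt (m (n + 1) - m n) (m n) v w)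
    -- the unique maximal and minimal paths
    (xmax xmin : {x : ∀ n, E n // ∀ n, tgt n (x n) = src (n + 1) (x (n + 1))})
    (hxmax : ∀ n, EdgeMaximal V E tgt le n (xmax.val n))
    (hxmax_unique : ∀ x : {x : ∀ n, E n // ∀ n, tgt n (x n) = src (n + 1) (x (n + 1))},
      (∀ n, EdgeMaximal V E tgt le n (x.val n)) → x = xmax)
    (hxmin : ∀ n, EdgeMinimal V E tgt le n (xmin.val n))
    (hxmin_unique : ∀ x : {x : ∀ n, E n // ∀ n, tgt n (x n) = src (n + 1) (x (n + 1))},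
      (∀ n, EdgeMinimal V E tgt le n (x.val n)) → x = xmin) :
    ∀ Φ : Equiv.Perm {x : ∀ n, E n // ∀ n, tgt n (x n) = src (n + 1) (x (n + 1))},
      Φ xmax = xmin →
      (∀ x, x ≠ xmax → ∃ k : ℕ,
        (∀ i, i < k → EdgeMaximal V E tgt le i (x.val i)) ∧
        ¬ EdgeMaximal V E tgt le k (x.val k) ∧
        EdgeSucc V E tgt le k (x.val k) ((Φ x).val k) ∧
        (∀ i, k < i → (Φ x).val i = x.val i) ∧
        (∀ i, i < k → EdgeMinimal V E tgt le i ((Φ x).val i))) →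
      ∀ x y : {x : ∀ n, E n // ∀ n, tgt n (x n) = src (n + 1) (x (n + 1))},
        (∀ n : ℤ, (Φ ^ n) x ≠ xmax) →
        ((∃ n : ℤ, (Φ ^ n) x = y) ↔ ∃ N : ℕ, ∀ n, N ≤ n → x.val n = y.val n) :=
  vershik_orbit_iff_cofinal_general V E src tgt le hcomp hantisymm htrans htotal xmax xmin hxmax
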